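/- Every ortholattice L in which the 3-Go equation holds — that is, (a → b) ∩ (b → c) ∩ (c → a) = (c → b) ∩ (b → a) ∩ (a → c) for all a, b, c ∈ L, where x → y denotes x′ ∪ (x ∩ y) — is orthomodular: for all a, b ∈ L, a ≤ b implies b = a ∪ (a′ ∩ b). -/
import Mathlib


/-- An ortholattice: a bounded lattice with an orthocomplementation. -/
class Ortholattice (α : Type*) extends Lattice α, BoundedOrder α where
  ocompl : α → α
  sup_ocompl : ∀ a : α, a ⊔ ocompl a = ⊤
  inf_ocompl : ∀ a : α, a ⊓ ocompl a = ⊥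
  ocompl_anti : ∀ a b : α, a ≤ b → ocompl b ≤ ocompl a
  ocompl_ocompl : ∀ a : α, ocompl (ocompl a) = a

postfix:max "ᗮ" => Ortholattice.ocompl

/-- An orthomodular lattice. -/
class OrthomodularLattice (α : Type*) extends Ortholattice α where
  orthomodular : ∀ a b : α, a ≤ b → b = a ⊔ (aᗮ ⊓ b)

/-- The Sasaki hook `x → y = x′ ∪ (x ∩ y)`. -/
def oimp {α : Type*} [Ortholattice α] (x y : α) : α := xᗮ ⊔ (x ⊓ y)

section Aux
variable {α : Type*} [Ortholattice α]

lemma ocompl_top : (⊤ : α)ᗮ = ⊥ := by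
  have := Ortholattice.inf_ocompl (⊤ : α)
  simpa using this

lemma ocompl_sup_self (a : α) : aᗮ ⊔ a = ⊤ := by
  rw [sup_comm]; exact Ortholattice.sup_ocompl a

lemma ocompl_sup (x y : α) : (x ⊔ y)ᗮ = xᗮ ⊓ yᗮ := by
  apply le_antisymm
  · exact le_inf (Ortholattice.ocompl_anti _ _ le_sup_left)
      (Ortholattice.ocompl_anti _ _ le_sup_right)
  · have hx : x ≤ (xᗮ ⊓ yᗮ)ᗮ := by
      have := Ortholattice.ocompl_anti _ _ (inf_le_left : xᗮ ⊓ yᗮ ≤ xᗮ)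
      rwa [Ortholattice.ocompl_ocompl] at this
    have hy : y ≤ (xᗮ ⊓ yᗮ)ᗮ := by
      have := Ortholattice.ocompl_anti _ _ (inf_le_right : xᗮ ⊓ yᗮ ≤ yᗮ)
      rwa [Ortholattice.ocompl_ocompl] at this
    have := Ortholattice.ocompl_anti _ _ (sup_le hx hy)
    rwa [Ortholattice.ocompl_ocompl] at this

lemma ocompl_inf (x y : α) : (x ⊓ y)ᗮ = xᗮ ⊔ yᗮ := by
  have := ocompl_sup (xᗮ) (yᗮ)
  rw [Ortholattice.ocompl_ocompl, Ortholattice.ocompl_ocompl] at this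
  rw [← this, Ortholattice.ocompl_ocompl]

/-- Dual orthomodular law from 3-Go, via the instance (⊤, a, b). -/
lemma dual_om (h3go : ∀ a b c : α,
      oimp a b ⊓ oimp b c ⊓ oimp c a = oimp c b ⊓ oimp b a ⊓ oimp a c)
    (a b : α) (hab : a ≤ b) : a = (bᗮ ⊔ a) ⊓ b := by
  have h := h3go ⊤ a b
  simp only [oimp, ocompl_top, bot_sup_eq, top_inf_eq, inf_top_eq,
    inf_of_le_left hab, inf_of_le_right hab, ocompl_sup_self,
    Ortholattice.sup_ocompl] at h
  simpa using h

end Aux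

theorem threeGo_implies_orthomodular {α : Type*} [Ortholattice α]
    (h3go : ∀ a b c : α,
      oimp a b ⊓ oimp b c ⊓ oimp c a = oimp c b ⊓ oimp b a ⊓ oimp a c) :
    ∀ a b : α, a ≤ b → b = a ⊔ (aᗮ ⊓ b) := by
  intro a b hab
  have hba : bᗮ ≤ aᗮ := Ortholattice.ocompl_anti _ _ hab
  have h := dual_om h3go bᗮ aᗮ hba
  rw [Ortholattice.ocompl_ocompl] at h
  have h2 := congrArg Ortholattice.ocompl h
  rw [Ortholattice.ocompl_ocompl, ocompl_inf, ocompl_sup,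
    Ortholattice.ocompl_ocompl, Ortholattice.ocompl_ocompl] at h2
  rw [sup_comm] at h2
  exact h2
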